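/- arXiv:1304.7477 — 3 statements merged into one kernel-verified Lean document; each statement's English description precedes it below -/
import Mathlib

section
/- Let d ≥ 1, a ≥ 0, δ ∈ (0,1). Let K be a nonempty compact set and B₀ ⊆ B closed boxes in ℝ^d with K ⊆ B₀ and d(∂B₀, ∂B) > δ, and let φ_δ be a continuous probability density supported in the closed Euclidean ball B(0,δ). Then the set D_{a,δ} = {μ ∈ M₊(B) : {r_δ(μ) ≥ a} disconnects K from ∂B₀} is a closed subset of M₊(B). -/
open MeasureTheory

open scoped BoundedContinuousFunction NNReal ENNReal

/-- The pairing between bounded continuous functions and finite measures is jointly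
continuous. -/
lemma pairing_continuous {α : Type*} [TopologicalSpace α] [MeasurableSpace α]
    [OpensMeasurableSpace α] :
    Continuous fun p : (α →ᵇ ℝ) × FiniteMeasure α => ∫ x, p.1 x ∂(p.2 : Measure α) := by
  rw [continuous_iff_continuousAt]
  rintro ⟨f₀, μ₀⟩
  have key : ∀ p : (α →ᵇ ℝ) × FiniteMeasure α,
      ∫ x, p.1 x ∂(p.2 : Measure α)
        = (∫ x, (p.1 - f₀) x ∂(p.2 : Measure α)) + ∫ x, f₀ x ∂(p.2 : Measure α) := by
    rintro ⟨f, μ⟩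
    simp only [BoundedContinuousFunction.coe_sub, Pi.sub_apply]
    rw [integral_sub (f.integrable _) (f₀.integrable _)]
    ring
  have h1 : Filter.Tendsto (fun p : (α →ᵇ ℝ) × FiniteMeasure α =>
      ∫ x, (p.1 - f₀) x ∂(p.2 : Measure α)) (nhds (f₀, μ₀)) (nhds 0) := by
    apply squeeze_zero_norm
      (a := fun p : (α →ᵇ ℝ) × FiniteMeasure α =>
        ENNReal.toReal ((p.2 : Measure α) Set.univ) * ‖p.1 - f₀‖)
      (fun p => (p.1 - f₀).norm_integral_le_mul_norm (p.2 : Measure α))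
    have hmass : Continuous fun p : (α →ᵇ ℝ) × FiniteMeasure α =>
        ENNReal.toReal ((p.2 : Measure α) Set.univ) := by
      have h : (fun p : (α →ᵇ ℝ) × FiniteMeasure α =>
          ENNReal.toReal ((p.2 : Measure α) Set.univ))
          = fun p : (α →ᵇ ℝ) × FiniteMeasure α => ((p.2.mass : ℝ≥0) : ℝ) := by
        funext p
        rw [show ((p.2 : Measure α) Set.univ) = (p.2.mass : ℝ≥0∞)
          from FiniteMeasure.ennreal_mass.symm, ENNReal.coe_toReal]
      rw [h]
      exact NNReal.continuous_coe.comp (FiniteMeasure.continuous_mass.comp continuous_snd)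
    have hnorm : Continuous fun p : (α →ᵇ ℝ) × FiniteMeasure α => ‖p.1 - f₀‖ :=
      (continuous_fst.sub continuous_const).norm
    have h : Filter.Tendsto (fun p : (α →ᵇ ℝ) × FiniteMeasure α =>
        ENNReal.toReal ((p.2 : Measure α) Set.univ) * ‖p.1 - f₀‖) (nhds (f₀, μ₀))
        (nhds (ENNReal.toReal ((μ₀ : Measure α) Set.univ) * ‖f₀ - f₀‖)) :=
      (hmass.mul hnorm).tendsto _
    have hz : ENNReal.toReal ((μ₀ : Measure α) Set.univ) * ‖f₀ - f₀‖ = 0 := by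
      rw [sub_self, norm_zero, mul_zero]
    rw [hz] at h
    exact h
  have h2 : Filter.Tendsto (fun p : (α →ᵇ ℝ) × FiniteMeasure α =>
      ∫ x, f₀ x ∂(p.2 : Measure α)) (nhds (f₀, μ₀)) (nhds (∫ x, f₀ x ∂(μ₀ : Measure α))) :=
    ((FiniteMeasure.continuous_integral_boundedContinuousFunction f₀).comp
      continuous_snd).tendsto (f₀, μ₀)
  have h := h1.add h2
  rw [zero_add] at h
  exact Filter.Tendsto.congr (fun p => (key p).symm) h

/-- Statement (6.7) of Lemma 6.1 of the paper: the set
`D_{a,δ} = {μ ∈ M₊(B) : {r_δ(μ) ≥ a} disconnects K from ∂B₀}` is a closed subset of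
`M₊(B)` (finite nonnegative measures on the closed box `B` with the weak topology),
where `r_δ(μ)(z) = ∫_B φ_δ(z − y) μ(dy)` and disconnection means that every continuous
path in `B₀` from `K` to `∂B₀` meets values of `r_δ(μ)` of supremum at least `a`. -/
theorem disconnection_event_closed (d : ℕ) (hd : 1 ≤ d) (a : ℝ) (ha : 0 ≤ a)
    (δ : ℝ) (hδ : δ ∈ Set.Ioo (0 : ℝ) 1)
    (K : Set (EuclideanSpace ℝ (Fin d))) (hKne : K.Nonempty) (hK : IsCompact K)
    (lo₀ hi₀ lo hi : Fin d → ℝ) (hlh₀ : ∀ i, lo₀ i < hi₀ i) (hlh : ∀ i, lo i < hi i)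
    (B₀ B : Set (EuclideanSpace ℝ (Fin d)))
    (hB₀ : B₀ = {x : EuclideanSpace ℝ (Fin d) | ∀ i, x i ∈ Set.Icc (lo₀ i) (hi₀ i)})
    (hBdef : B = {x : EuclideanSpace ℝ (Fin d) | ∀ i, x i ∈ Set.Icc (lo i) (hi i)})
    (hKB₀ : K ⊆ B₀) (hB₀B : B₀ ⊆ B)
    (hdist : ∀ x ∈ frontier B₀, ∀ y ∈ frontier B, δ < dist x y)
    (φ : EuclideanSpace ℝ (Fin d) → ℝ) (hφc : Continuous φ) (hφ0 : ∀ x, 0 ≤ φ x)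
    (hφsupp : ∀ x, x ∉ Metric.closedBall (0 : EuclideanSpace ℝ (Fin d)) δ → φ x = 0)
    (hφint : ∫ x, φ x = 1) :
    IsClosed {μ : FiniteMeasure B |
      ∀ ψ : ℝ → EuclideanSpace ℝ (Fin d), ContinuousOn ψ (Set.Icc 0 1) →
        (∀ t ∈ Set.Icc (0 : ℝ) 1, ψ t ∈ B₀) → ψ 0 ∈ K → ψ 1 ∈ frontier B₀ →
        a ≤ ⨆ t : Set.Icc (0 : ℝ) 1,
              ∫ y : B, φ (ψ t - (y : EuclideanSpace ℝ (Fin d))) ∂(μ : Measure B)} := by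
  -- `B` is compact
  have hBcompact : IsCompact B := by
    have hEq : B = (EuclideanSpace.equiv (Fin d) ℝ).toHomeomorph ⁻¹'
        (Set.univ.pi fun i => Set.Icc (lo i) (hi i)) := by
      ext x
      simp only [hBdef, Set.mem_setOf_eq, Set.mem_preimage, Set.mem_pi, Set.mem_univ,
        forall_true_left]
      rfl
    rw [hEq]
    exact (Homeomorph.isCompact_preimage _).mpr (isCompact_univ_pi fun i => isCompact_Icc)
  haveI : CompactSpace B := isCompact_iff_compactSpace.mp hBcompact
  haveI : Nonempty (Set.Icc (0 : ℝ) 1) := ⟨⟨0, by norm_num⟩⟩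
  -- rewrite as an intersection over paths
  have hiInter : {μ : FiniteMeasure B |
      ∀ ψ : ℝ → EuclideanSpace ℝ (Fin d), ContinuousOn ψ (Set.Icc 0 1) →
        (∀ t ∈ Set.Icc (0 : ℝ) 1, ψ t ∈ B₀) → ψ 0 ∈ K → ψ 1 ∈ frontier B₀ →
        a ≤ ⨆ t : Set.Icc (0 : ℝ) 1,
              ∫ y : B, φ (ψ t - (y : EuclideanSpace ℝ (Fin d))) ∂(μ : Measure B)}
      = ⋂ ψ : ℝ → EuclideanSpace ℝ (Fin d), {μ : FiniteMeasure B |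
          ContinuousOn ψ (Set.Icc 0 1) →
          (∀ t ∈ Set.Icc (0 : ℝ) 1, ψ t ∈ B₀) → ψ 0 ∈ K → ψ 1 ∈ frontier B₀ →
          a ≤ ⨆ t : Set.Icc (0 : ℝ) 1,
              ∫ y : B, φ (ψ t - (y : EuclideanSpace ℝ (Fin d))) ∂(μ : Measure B)} := by
    ext μ
    simp only [Set.mem_setOf_eq, Set.mem_iInter]
  rw [hiInter]
  refine isClosed_iInter fun ψ => ?_
  by_cases hψ : ContinuousOn ψ (Set.Icc 0 1) ∧ (∀ t ∈ Set.Icc (0 : ℝ) 1, ψ t ∈ B₀) ∧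
      ψ 0 ∈ K ∧ ψ 1 ∈ frontier B₀
  swap
  · -- vacuous case: the set is the whole space
    have hEq : {μ : FiniteMeasure B |
        ContinuousOn ψ (Set.Icc 0 1) →
        (∀ t ∈ Set.Icc (0 : ℝ) 1, ψ t ∈ B₀) → ψ 0 ∈ K → ψ 1 ∈ frontier B₀ →
        a ≤ ⨆ t : Set.Icc (0 : ℝ) 1,
            ∫ y : B, φ (ψ t - (y : EuclideanSpace ℝ (Fin d))) ∂(μ : Measure B)}
        = Set.univ := by
      ext μ
      simp only [Set.mem_setOf_eq, Set.mem_univ, iff_true]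
      intro h1 h2 h3 h4
      exact absurd ⟨h1, h2, h3, h4⟩ hψ
    rw [hEq]
    exact isClosed_univ
  obtain ⟨hc, hψ2, hψ3, hψ4⟩ := hψ
  -- the jointly continuous integrand
  have hGc : Continuous fun p : (Set.Icc (0 : ℝ) 1) × B =>
      φ (ψ p.1 - (p.2 : EuclideanSpace ℝ (Fin d))) :=
    hφc.comp (((hc.restrict).comp continuous_fst).sub
      (continuous_subtype_val.comp continuous_snd))
  set G : C((Set.Icc (0 : ℝ) 1) × B, ℝ) := ⟨_, hGc⟩ with hG
  set f : (Set.Icc (0 : ℝ) 1) → (B →ᵇ ℝ) := fun t =>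
    (ContinuousMap.isometryEquivBoundedOfCompact B ℝ) ((ContinuousMap.curry G) t) with hfdef
  have hf : Continuous f :=
    (ContinuousMap.isometryEquivBoundedOfCompact B ℝ).continuous.comp
      (ContinuousMap.curry G).continuous
  set F : (Set.Icc (0 : ℝ) 1) × FiniteMeasure B → ℝ := fun p =>
    ∫ y, f p.1 y ∂(p.2 : Measure B) with hFdef
  have hF : Continuous F :=
    pairing_continuous.comp ((hf.comp continuous_fst).prodMk continuous_snd)
  have hFeq : ∀ (t : Set.Icc (0 : ℝ) 1) (μ : FiniteMeasure B),
      F (t, μ) = ∫ y : B, φ (ψ t - (y : EuclideanSpace ℝ (Fin d))) ∂(μ : Measure B) := by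
    intro t μ
    simp only [hFdef, hfdef, hG, ContinuousMap.isometryEquivBoundedOfCompact_apply,
      BoundedContinuousFunction.mkOfCompact_apply, ContinuousMap.curry_apply,
      ContinuousMap.coe_mk]
  -- express the set as the projection of a closed set along a compact factor
  have himg : {μ : FiniteMeasure B |
      ContinuousOn ψ (Set.Icc 0 1) →
      (∀ t ∈ Set.Icc (0 : ℝ) 1, ψ t ∈ B₀) → ψ 0 ∈ K → ψ 1 ∈ frontier B₀ →
      a ≤ ⨆ t : Set.Icc (0 : ℝ) 1,
          ∫ y : B, φ (ψ t - (y : EuclideanSpace ℝ (Fin d))) ∂(μ : Measure B)}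
      = Prod.snd '' {p : (Set.Icc (0 : ℝ) 1) × FiniteMeasure B | a ≤ F p} := by
    ext μ
    have hmax : ∃ t₀ : Set.Icc (0 : ℝ) 1, ∀ t : Set.Icc (0 : ℝ) 1, F (t, μ) ≤ F (t₀, μ) := by
      obtain ⟨t₀, -, ht₀⟩ := isCompact_univ.exists_isMaxOn Set.univ_nonempty
        ((hF.comp (continuous_id.prodMk continuous_const)).continuousOn :
          ContinuousOn (fun t : Set.Icc (0 : ℝ) 1 => F (t, μ)) Set.univ)
      exact ⟨t₀, fun t => ht₀ (Set.mem_univ t)⟩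
    obtain ⟨t₀, ht₀⟩ := hmax
    have hbdd : BddAbove (Set.range fun t : Set.Icc (0 : ℝ) 1 =>
        ∫ y : B, φ (ψ t - (y : EuclideanSpace ℝ (Fin d))) ∂(μ : Measure B)) := by
      refine ⟨F (t₀, μ), ?_⟩
      rintro x ⟨t, rfl⟩
      have h := ht₀ t
      rwa [hFeq] at h
    constructor
    · intro hμ
      have hsup : a ≤ ⨆ t : Set.Icc (0 : ℝ) 1,
          ∫ y : B, φ (ψ t - (y : EuclideanSpace ℝ (Fin d))) ∂(μ : Measure B) := by
        exact hμ hc hψ2 hψ3 hψ4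
      refine ⟨(t₀, μ), ?_, rfl⟩
      have hle : (⨆ t : Set.Icc (0 : ℝ) 1,
          ∫ y : B, φ (ψ t - (y : EuclideanSpace ℝ (Fin d))) ∂(μ : Measure B)) ≤ F (t₀, μ) := by
        refine ciSup_le fun t => ?_
        have h := ht₀ t
        rwa [hFeq] at h
      exact le_trans hsup hle
    · rintro ⟨⟨t, μ'⟩, hp, rfl⟩
      intro _ _ _ _
      refine le_trans hp ?_
      rw [hFeq]
      exact le_ciSup hbdd t
  rw [himg]
  exact isClosedMap_snd_of_compactSpace _ (isClosed_le continuous_const hF)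
end

section
/- Let d ≥ 3 and let N ≥ 1 be an integer. There exists a constant c = c(d) > 0 such that for every finitely supported φ : 𝕃_N → ℝ with step extension Φ, every standard coordinate unit vector e_i of ℝ^d, and every real s > 0, one has ∫_{ℝ^d} |Φ(z + s·e_i) − Φ(z)|² dz ≤ c · s · max(s, 1/N) · E_N(φ,φ). -/
open MeasureTheory
open scoped ENNReal

/-- Two points of `ℤ^d` are neighbours when their Euclidean distance is `1`
(equivalently, the corresponding points of `𝕃_N = (1/N)ℤ^d` are at distance `1/N`). -/
def IsLatticeNeighbor {d : ℕ} (x y : Fin d → ℤ) : Prop :=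
  (∑ i, (x i - y i) ^ 2) = 1

/-- The discrete Dirichlet form
`E_N(φ,φ) = (1/(2N^{d−2})) Σ_{ordered neighbour pairs (y,y')} (1/2)(φ(y')−φ(y))² ∈ [0,∞]`
of a function on the scaled lattice `𝕃_N`, parametrized by `ℤ^d`. -/
noncomputable def discreteDirichletForm (d N : ℕ) (φ : (Fin d → ℤ) → ℝ) : ℝ≥0∞ :=
  ENNReal.ofReal (1 / (2 * (N : ℝ) ^ ((d : ℝ) - 2))) *
    ∑' p : {p : (Fin d → ℤ) × (Fin d → ℤ) // IsLatticeNeighbor p.1 p.2},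
      ENNReal.ofReal ((1 / 2) * (φ p.1.2 - φ p.1.1) ^ 2)

/-- The step extension of `φ : 𝕃_N → ℝ`, equal to `φ(y)` on `y + [0,1/N)^d`. -/
noncomputable def stepExtension (d N : ℕ) (φ : (Fin d → ℤ) → ℝ) (z : Fin d → ℝ) : ℝ :=
  φ (fun i => ⌊z i * N⌋)

/-!
Rescaling `z ↦ N • z` reduces the estimate to unit scale, with the shift `t = N s`. There the
jump `Φ(w + t eᵢ) - Φ(w)` telescopes into at most `⌊t⌋ + 1` lattice differences along `eᵢ`, so
by Cauchy–Schwarz its square is at most `⌊t⌋ + 1` times the sum of their squares. The `j`-th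
difference only occurs on the part of each unit cell within distance `t - j` of its upper face
in direction `i`, which has volume at most `min 1 t`; integrating therefore gives
`(⌊t⌋ + 1)² · min 1 t · ∑_y (φ(y + eᵢ) - φ(y))²`, and the pairs `(y, y + eᵢ)` are among the
neighbour pairs of the Dirichlet form.
-/

namespace MeasureTheory.Measure

theorem lintegral_comp_smul {E : Type*} [NormedAddCommGroup E] [NormedSpace ℝ E]
    [MeasurableSpace E] [BorelSpace E] [FiniteDimensional ℝ E] (μ : Measure E)
    [μ.IsAddHaarMeasure] (f : E → ℝ≥0∞) {r : ℝ} (hr : r ≠ 0) :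
    ∫⁻ x, f (r • x) ∂μ = ENNReal.ofReal |(r ^ Module.finrank ℝ E)⁻¹| * ∫⁻ x, f x ∂μ := by
  have h := lintegral_map_equiv f (MeasurableEquiv.smul₀ r hr) (μ := μ)
  rw [MeasurableEquiv.coe_smul₀, map_addHaar_smul μ hr, lintegral_smul_measure] at h
  exact h.symm

end MeasureTheory.Measure

noncomputable def coordFloor {ι : Type*} (w : ι → ℝ) : ι → ℤ := fun k => ⌊w k⌋

section coordFloor

variable {ι : Type*}

theorem measurable_coordFloor [Countable ι] : Measurable (coordFloor : (ι → ℝ) → ι → ℤ) :=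
  measurable_pi_lambda _ fun k => (measurable_pi_apply k).floor

theorem coordFloor_preimage_singleton (y : ι → ℤ) :
    coordFloor ⁻¹' {y} = Set.univ.pi fun k => Set.Ico (y k : ℝ) (y k + 1) := by
  ext w
  simp [coordFloor, funext_iff, Int.floor_eq_iff]

theorem lintegral_eq_tsum_setLIntegral_coordFloor [Finite ι] (μ : Measure (ι → ℝ))
    (f : (ι → ℝ) → ℝ≥0∞) :
    ∫⁻ w, f w ∂μ = ∑' y, ∫⁻ w in coordFloor ⁻¹' {y}, f w ∂μ := by
  rw [← lintegral_iUnion (fun y => measurable_coordFloor (measurableSet_singleton y))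
    (pairwise_disjoint_fiber _), ← Set.preimage_iUnion, Set.iUnion_of_singleton,
    Set.preimage_univ, Measure.restrict_univ]

theorem coordFloor_add_smul_single [DecidableEq ι] (w : ι → ℝ) (i : ι) (t : ℝ) :
    coordFloor (w + t • Pi.single i 1) =
      coordFloor w + (⌊w i + t⌋ - ⌊w i⌋) • Pi.single i 1 := by
  ext k
  rcases eq_or_ne k i with rfl | hk
  · simp [coordFloor]
  · simp [coordFloor, hk]

variable [Fintype ι] [DecidableEq ι]

theorem volume_pi_update_Ico (y : ι → ℤ) (i : ι) (J : Set ℝ) :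
    volume (Set.univ.pi (Function.update (fun k => Set.Ico (y k : ℝ) (y k + 1)) i J)) =
      volume J := by
  rw [volume_pi_pi, Finset.prod_eq_single i (fun k _ hk => by simp [hk]) (by simp)]
  simp

theorem volume_coordFloor_preimage_inter_le (y : ι → ℤ) (i : ι) (a : ℝ) :
    volume (coordFloor ⁻¹' {y} ∩ {w | a ≤ w i}) ≤ ENNReal.ofReal (min 1 (y i + 1 - a)) := by
  rw [ENNReal.ofReal_min, ENNReal.ofReal_one]
  refine le_min ?_ ?_
  · calc _ ≤ volume (coordFloor ⁻¹' {y}) := measure_mono Set.inter_subset_left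
      _ = 1 := by simp [coordFloor_preimage_singleton, Real.volume_pi_Ico]
  · calc
      _ ≤ volume (Set.univ.pi (Function.update (fun k => Set.Ico (y k : ℝ) (y k + 1)) i
            (Set.Ico a (y i + 1)))) := by
        refine measure_mono fun w ⟨hw, hwa⟩ k _ => ?_
        rw [coordFloor_preimage_singleton] at hw
        rcases eq_or_ne k i with rfl | hk
        · simpa using ⟨hwa, (hw k trivial).2⟩
        · simpa [hk] using hw k trivial
      _ = _ := by rw [volume_pi_update_Ico, Real.volume_Ico]

end coordFloor

theorem floor_add_sub_floor_le (a : ℝ) {t : ℝ} (ht : 0 ≤ t) : ⌊a + t⌋ - ⌊a⌋ ≤ ⌊t⌋₊ + 1 := by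
  have := Int.le_floor_add_floor a t
  rw [← Int.natCast_floor_eq_floor ht] at this
  omega

theorem natFloor_add_one_sq_mul_min_le {t : ℝ} (ht : 0 ≤ t) :
    ((⌊t⌋₊ + 1 : ℕ) : ℝ) ^ 2 * min 1 t ≤ 4 * t * max t 1 := by
  rcases lt_or_ge t 1 with h1 | h1
  · rw [Nat.floor_eq_zero.mpr h1, min_eq_right h1.le, max_eq_right h1.le]
    norm_num
    linarith
  · rw [min_eq_left h1, max_eq_left h1]
    have := Nat.floor_le ht
    push_cast
    nlinarith

theorem sq_sub_le_mul_sum_sq_increments {G : Type*} [AddMonoid G] (φ : G → ℝ) (y e : G)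
    {K m : ℕ} (hKm : K ≤ m) :
    (φ (y + K • e) - φ y) ^ 2 ≤
      m * ∑ j ∈ Finset.range m, if j < K then (φ (y + j • e + e) - φ (y + j • e)) ^ 2 else 0 := by
  have htel : φ (y + K • e) - φ y = ∑ j ∈ Finset.range K, (φ (y + j • e + e) - φ (y + j • e)) := by
    simp_rw [add_assoc, ← succ_nsmul]
    simpa using (Finset.sum_range_sub (fun n => φ (y + n • e)) K).symm
  have hfilter : (Finset.range m).filter (· < K) = Finset.range K := by
    ext j; simp only [Finset.mem_filter, Finset.mem_range]; omega
  rw [← Finset.sum_filter, hfilter, htel]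
  calc _ ≤ (K : ℝ) * ∑ j ∈ Finset.range K, (φ (y + j • e + e) - φ (y + j • e)) ^ 2 := by
        simpa using sq_sum_le_card_mul_sum_sq (s := Finset.range K)
          (f := fun j => φ (y + j • e + e) - φ (y + j • e))
    _ ≤ _ := by gcongr

noncomputable def latticeDiff {ι : Type*} [DecidableEq ι] (φ : (ι → ℤ) → ℝ) (i : ι)
    (y : ι → ℤ) : ℝ :=
  φ (y + Pi.single i 1) - φ y

section unitScale

variable {ι : Type*} [DecidableEq ι]

theorem ofReal_sq_sub_coordFloor_translate_le (φ : (ι → ℤ) → ℝ) (i : ι) {t : ℝ} (ht : 0 ≤ t)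
    (w : ι → ℝ) :
    ENNReal.ofReal ((φ (coordFloor (w + t • Pi.single i 1)) - φ (coordFloor w)) ^ 2) ≤
      ((⌊t⌋₊ + 1 : ℕ) : ℝ≥0∞) * ∑ j ∈ Finset.range (⌊t⌋₊ + 1),
        {w : ι → ℝ | (j : ℤ) < ⌊w i + t⌋ - ⌊w i⌋}.indicator
          (fun w => ENNReal.ofReal (latticeDiff φ i (coordFloor w + j • Pi.single i 1) ^ 2)) w := by
  set k := ⌊w i + t⌋ - ⌊w i⌋
  have hk : k • (Pi.single i 1 : ι → ℤ) = k.toNat • Pi.single i 1 := by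
    rw [← natCast_zsmul, Int.toNat_of_nonneg (sub_nonneg.mpr (Int.floor_mono (by linarith)))]
  have hkm : k.toNat ≤ ⌊t⌋₊ + 1 := by have := floor_add_sub_floor_le (w i) ht; omega
  rw [coordFloor_add_smul_single, hk]
  calc _ ≤ ENNReal.ofReal (((⌊t⌋₊ + 1 : ℕ) : ℝ) * ∑ j ∈ Finset.range (⌊t⌋₊ + 1),
          if j < k.toNat then latticeDiff φ i (coordFloor w + j • Pi.single i 1) ^ 2 else 0) :=
        ENNReal.ofReal_le_ofReal
          (sq_sub_le_mul_sum_sq_increments φ (coordFloor w) (Pi.single i 1) hkm)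
    _ = _ := by
        rw [ENNReal.ofReal_mul (by positivity), ENNReal.ofReal_natCast,
          ENNReal.ofReal_sum_of_nonneg (fun j _ => by positivity)]
        congr 1
        refine Finset.sum_congr rfl fun j _ => ?_
        simp [Set.indicator, Int.lt_toNat, apply_ite ENNReal.ofReal, k]

theorem lintegral_indicator_latticeDiff_le [Fintype ι] (φ : (ι → ℤ) → ℝ) (i : ι) {t : ℝ}
    (j : ℕ) :
    ∫⁻ w, {w : ι → ℝ | (j : ℤ) < ⌊w i + t⌋ - ⌊w i⌋}.indicator
        (fun w => ENNReal.ofReal (latticeDiff φ i (coordFloor w + j • Pi.single i 1) ^ 2)) w ≤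
      ENNReal.ofReal (min 1 t) * ∑' y, ENNReal.ofReal (latticeDiff φ i y ^ 2) := by
  set e : ι → ℤ := Pi.single i 1
  have hfiber (y : ι → ℤ) :
      ∫⁻ w in coordFloor ⁻¹' {y}, {w : ι → ℝ | (j : ℤ) < ⌊w i + t⌋ - ⌊w i⌋}.indicator
          (fun w => ENNReal.ofReal (latticeDiff φ i (coordFloor w + j • e) ^ 2)) w ≤
        ENNReal.ofReal (min 1 t) * ENNReal.ofReal (latticeDiff φ i (y + j • e) ^ 2) := by
    set S := {w : ι → ℝ | (y i + j + 1 - t : ℝ) ≤ w i}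
    have hS : MeasurableSet S := measurableSet_le measurable_const (measurable_pi_apply i)
    have hF : MeasurableSet (coordFloor ⁻¹' {y}) :=
      measurable_coordFloor (measurableSet_singleton y)
    rw [setLIntegral_congr_fun hF (g := S.indicator fun _ =>
      ENNReal.ofReal (latticeDiff φ i (y + j • e) ^ 2)) fun w (hw : coordFloor w = y) => ?_]
    · rw [lintegral_indicator hS, setLIntegral_const, Measure.restrict_apply hS, mul_comm,
        Set.inter_comm]
      gcongr
      refine (volume_coordFloor_preimage_inter_le y i _).trans (ENNReal.ofReal_le_ofReal ?_)
      exact min_le_min le_rfl (by linarith [(j.cast_nonneg : (0 : ℝ) ≤ j)])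
    · have hwi : ⌊w i⌋ = y i := congrFun hw i
      have hmem : (j : ℤ) < ⌊w i + t⌋ - ⌊w i⌋ ↔ w ∈ S := by
        rw [hwi, Set.mem_ofPred_eq, show (j : ℤ) < ⌊w i + t⌋ - y i ↔ y i + j + 1 ≤ ⌊w i + t⌋ by
          omega, Int.le_floor]
        push_cast
        constructor <;> intro h <;> linarith
      simp only [Set.indicator, Set.mem_ofPred_eq, hmem, hw]
  rw [lintegral_eq_tsum_setLIntegral_coordFloor]
  calc _ ≤ ∑' y, ENNReal.ofReal (min 1 t) * ENNReal.ofReal (latticeDiff φ i (y + j • e) ^ 2) :=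
        ENNReal.tsum_le_tsum hfiber
    _ = _ := by
        rw [ENNReal.tsum_mul_left]
        exact congrArg _
          ((Equiv.addRight (j • e)).tsum_eq fun y => ENNReal.ofReal (latticeDiff φ i y ^ 2))

theorem lintegral_sq_sub_coordFloor_translate_le [Fintype ι] (φ : (ι → ℤ) → ℝ) (i : ι)
    {t : ℝ} (ht : 0 ≤ t) :
    ∫⁻ w, ENNReal.ofReal ((φ (coordFloor (w + t • Pi.single i 1)) - φ (coordFloor w)) ^ 2) ≤
      ENNReal.ofReal (4 * t * max t 1) * ∑' y, ENNReal.ofReal (latticeDiff φ i y ^ 2) := by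
  have hmeas (j : ℕ) : Measurable ({w : ι → ℝ | (j : ℤ) < ⌊w i + t⌋ - ⌊w i⌋}.indicator
      fun w => ENNReal.ofReal (latticeDiff φ i (coordFloor w + j • Pi.single i 1) ^ 2)) := by
    have hg : Measurable fun y : ι → ℤ =>
        ENNReal.ofReal (latticeDiff φ i (y + j • Pi.single i 1) ^ 2) :=
      measurable_of_countable _
    exact (hg.comp measurable_coordFloor).indicator
      (measurableSet_lt measurable_const (by measurability))
  calc _ ≤ ∫⁻ w, ((⌊t⌋₊ + 1 : ℕ) : ℝ≥0∞) * ∑ j ∈ Finset.range (⌊t⌋₊ + 1),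
          {w : ι → ℝ | (j : ℤ) < ⌊w i + t⌋ - ⌊w i⌋}.indicator
            (fun w => ENNReal.ofReal (latticeDiff φ i (coordFloor w + j • Pi.single i 1) ^ 2)) w :=
        lintegral_mono fun w => ofReal_sq_sub_coordFloor_translate_le φ i ht w
    _ ≤ ((⌊t⌋₊ + 1 : ℕ) : ℝ≥0∞) * ∑ _j ∈ Finset.range (⌊t⌋₊ + 1),
          ENNReal.ofReal (min 1 t) * ∑' y, ENNReal.ofReal (latticeDiff φ i y ^ 2) := by
        rw [lintegral_const_mul _ (Finset.measurable_sum _ fun j _ => hmeas j),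
          lintegral_finsetSum _ fun j _ => hmeas j]
        gcongr with j
        exact lintegral_indicator_latticeDiff_le φ i j
    _ = ENNReal.ofReal (((⌊t⌋₊ + 1 : ℕ) : ℝ) ^ 2 * min 1 t) *
          ∑' y, ENNReal.ofReal (latticeDiff φ i y ^ 2) := by
        rw [Finset.sum_const, Finset.card_range, nsmul_eq_mul, ENNReal.ofReal_mul (by positivity),
          ENNReal.ofReal_pow (by positivity), ENNReal.ofReal_natCast]
        ring
    _ ≤ _ := by grw [natFloor_add_one_sq_mul_min_le ht]

end unitScale

theorem stepExtension_eq_coordFloor_smul (d N : ℕ) (φ : (Fin d → ℤ) → ℝ) (z : Fin d → ℝ) :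
    stepExtension d N φ z = φ (coordFloor ((N : ℝ) • z)) := by
  unfold stepExtension coordFloor
  simp only [Pi.smul_apply, smul_eq_mul, mul_comm]

theorem isLatticeNeighbor_add_single {d : ℕ} (y : Fin d → ℤ) (i : Fin d) :
    IsLatticeNeighbor y (y + Pi.single i 1) := by
  simp [IsLatticeNeighbor, Pi.single_apply]

theorem tsum_sq_latticeDiff_le_discreteDirichletForm {d N : ℕ} (hN : 0 < N)
    (φ : (Fin d → ℤ) → ℝ) (i : Fin d) :
    ∑' y, ENNReal.ofReal (latticeDiff φ i y ^ 2) ≤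
      ENNReal.ofReal (4 * (N : ℝ) ^ ((d : ℝ) - 2)) * discreteDirichletForm d N φ := by
  have hpos : (0 : ℝ) < (N : ℝ) ^ ((d : ℝ) - 2) := Real.rpow_pos_of_pos (by exact_mod_cast hN) _
  have hinj : Function.Injective fun y : Fin d → ℤ =>
      (⟨(y, y + Pi.single i 1), isLatticeNeighbor_add_single y i⟩ :
        {p : (Fin d → ℤ) × (Fin d → ℤ) // IsLatticeNeighbor p.1 p.2}) :=
    fun y y' h => congrArg (fun p => p.1.1) h
  rw [discreteDirichletForm, ← mul_assoc, ← ENNReal.ofReal_mul (by positivity),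
    show 4 * (N : ℝ) ^ ((d : ℝ) - 2) * (1 / (2 * (N : ℝ) ^ ((d : ℝ) - 2))) = 2 by
      field_simp; norm_num]
  calc _ = ENNReal.ofReal 2 * ∑' y, ENNReal.ofReal (1 / 2 * latticeDiff φ i y ^ 2) := by
        rw [← ENNReal.tsum_mul_left]
        refine tsum_congr fun y => ?_
        rw [← ENNReal.ofReal_mul (by norm_num)]
        ring_nf
    _ ≤ _ := by
        gcongr
        exact ENNReal.tsum_comp_le_tsum_of_injective hinj
          fun p => ENNReal.ofReal (1 / 2 * (φ p.1.2 - φ p.1.1) ^ 2)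

theorem step_extension_translation_estimate_general (d : ℕ) :
    ∃ c : ℝ, 0 < c ∧
      ∀ N : ℕ, 1 ≤ N → ∀ φ : (Fin d → ℤ) → ℝ, (Function.support φ).Finite →
      ∀ (i : Fin d) (s : ℝ), 0 < s →
        (∫⁻ z : Fin d → ℝ, ENNReal.ofReal
            ((stepExtension d N φ (z + s • (Pi.single i 1 : Fin d → ℝ)) - stepExtension d N φ z) ^ 2))
          ≤ ENNReal.ofReal (c * s * max s (1 / (N : ℝ))) * discreteDirichletForm d N φ := by
  refine ⟨16, by norm_num, fun N hN φ _ i s hs => ?_⟩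
  have hN0 : (0 : ℝ) < N := by exact_mod_cast hN
  set G : (Fin d → ℝ) → ℝ≥0∞ := fun w => ENNReal.ofReal
    ((φ (coordFloor (w + ((N : ℝ) * s) • Pi.single i 1)) - φ (coordFloor w)) ^ 2)
  calc _ = ∫⁻ z, G ((N : ℝ) • z) := by
        simp_rw [G, stepExtension_eq_coordFloor_smul, smul_add, smul_smul]
    _ = ENNReal.ofReal |((N : ℝ) ^ d)⁻¹| * ∫⁻ w, G w := by
        rw [Measure.lintegral_comp_smul volume G hN0.ne', Module.finrank_fin_fun]
    _ ≤ ENNReal.ofReal |((N : ℝ) ^ d)⁻¹| * (ENNReal.ofReal (4 * (N * s) * max (N * s) 1) *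
          (ENNReal.ofReal (4 * (N : ℝ) ^ ((d : ℝ) - 2)) * discreteDirichletForm d N φ)) :=
        mul_le_mul_right ((lintegral_sq_sub_coordFloor_translate_le φ i (by positivity)).trans
          (mul_le_mul_right (tsum_sq_latticeDiff_le_discreteDirichletForm hN φ i) _)) _
    _ = _ := by
        rw [← mul_assoc, ← mul_assoc, ← ENNReal.ofReal_mul (by positivity),
          ← ENNReal.ofReal_mul (by positivity)]
        congr 2
        have hmax : max ((N : ℝ) * s) 1 = N * max s (1 / N) := by
          rw [mul_max_of_nonneg _ _ hN0.le, mul_one_div_cancel hN0.ne']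
        rw [abs_of_pos (by positivity), Real.rpow_sub hN0, Real.rpow_natCast, Real.rpow_two, hmax]
        field_simp
        ring

/-- The translation estimate (5.36) from the proof of Proposition 5.6 of the paper:
for finitely supported `φ` on `𝕃_N` with step extension `Φ`, and every coordinate
direction `eᵢ` and `s > 0`,
`∫ |Φ(z + s·eᵢ) − Φ(z)|² dz ≤ c·s·max(s, 1/N)·E_N(φ,φ)` with `c = c(d)`. -/
theorem step_extension_translation_estimate (d : ℕ) (hd : 3 ≤ d) :
    ∃ c : ℝ, 0 < c ∧
      ∀ N : ℕ, 1 ≤ N → ∀ φ : (Fin d → ℤ) → ℝ, (Function.support φ).Finite →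
      ∀ (i : Fin d) (s : ℝ), 0 < s →
        (∫⁻ z : Fin d → ℝ, ENNReal.ofReal
            ((stepExtension d N φ (z + s • (Pi.single i 1 : Fin d → ℝ)) - stepExtension d N φ z) ^ 2))
          ≤ ENNReal.ofReal (c * s * max s (1 / (N : ℝ))) * discreteDirichletForm d N φ :=
  step_extension_translation_estimate_general d
end

section
/- Let H be a complex Hilbert space and let (R_t)_{t ≥ 0} be a family of bounded linear operators on H with R_0 = Id, R_{s+t} = R_s ∘ R_t for all s, t ≥ 0, each R_t self-adjoint, and t ↦ R_t φ continuous from [0,∞) to H for every φ ∈ H. Suppose there is a dense subset D ⊆ H such that ∫₀^∞ ⟨R_t φ, φ⟩ dt < ∞ for every φ ∈ D (note ⟨R_t φ, φ⟩ = ‖R_{t/2} φ‖² ≥ 0, and t ↦ ⟨R_t φ, φ⟩ is continuous, so the integral is well defined in [0,∞]). Then every R_t is a contraction: ‖R_t φ‖ ≤ ‖φ‖ for all t ≥ 0 and all φ ∈ H. -/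
/-!
Put `f t = re ⟪R t φ, φ⟫ = ‖R (t / 2) φ‖²`. Self-adjointness and the semigroup law turn
Cauchy–Schwarz into midpoint log-convexity, `f ((a + b) / 2)² ≤ f a * f b`. Taking `a = 0` gives
`f (2s) ≥ f s² / f 0`, so if `f τ > f 0` then `f (2ⁿ τ)` grows like `(f τ / f 0) ^ 2ⁿ`. Taking
`b = 2s - a ∈ [0, 1)`, where `f ≤ K` by continuity, gives `f a ≥ f s² / K`, so
`f s² ≤ K ∫₀^∞ f` for `s ≥ 1/2`. Hence `‖R (τ / 2) φ‖² = f τ ≤ f 0 = ‖φ‖²` for `φ ∈ D`, and by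
density for all `φ`.
-/

open MeasureTheory Set Filter

section MidpointLogConvex

variable {f : ℝ → ℝ}

lemma ofReal_sq_le_lintegral_Ioi_mul_of_midpoint_sq_le
    (hf : ∀ t, 0 ≤ t → 0 ≤ f t)
    (hmid : ∀ a b, 0 ≤ a → 0 ≤ b → f ((a + b) / 2) ^ 2 ≤ f a * f b)
    {K : ℝ} (hK : ∀ u ∈ Icc (0 : ℝ) 1, f u ≤ K) {s : ℝ} (hs : 1 / 2 ≤ s) :
    ENNReal.ofReal (f s ^ 2) ≤
      (∫⁻ t in Ioi 0, ENNReal.ofReal (f t)) * ENNReal.ofReal K := by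
  have hpointwise : ∀ v ∈ Ioc (2 * s - 1) (2 * s),
      ENNReal.ofReal (f s ^ 2) ≤ ENNReal.ofReal (f v) * ENNReal.ofReal K := by
    rintro v ⟨hv₁, hv₂⟩
    rw [← ENNReal.ofReal_mul (hf v (by linarith))]
    refine ENNReal.ofReal_le_ofReal ?_
    calc f s ^ 2 = f ((v + (2 * s - v)) / 2) ^ 2 := by ring_nf
      _ ≤ f v * f (2 * s - v) := hmid _ _ (by linarith) (by linarith)
      _ ≤ f v * K := by
        gcongr
        · exact hf v (by linarith)
        · exact hK _ ⟨by linarith, by linarith⟩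
  calc ENNReal.ofReal (f s ^ 2)
      = ∫⁻ _ in Ioc (2 * s - 1) (2 * s), ENNReal.ofReal (f s ^ 2) := by
        simp [Real.volume_Ioc]
    _ ≤ ∫⁻ v in Ioc (2 * s - 1) (2 * s), ENNReal.ofReal (f v) * ENNReal.ofReal K :=
        setLIntegral_mono' measurableSet_Ioc hpointwise
    _ = (∫⁻ v in Ioc (2 * s - 1) (2 * s), ENNReal.ofReal (f v)) * ENNReal.ofReal K :=
        lintegral_mul_const' _ _ ENNReal.ofReal_ne_top
    _ ≤ (∫⁻ t in Ioi 0, ENNReal.ofReal (f t)) * ENNReal.ofReal K := by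
        gcongr
        exact Ioc_subset_Ioi_self.trans (Ioi_subset_Ioi (by linarith))

lemma mul_div_pow_two_pow_le_of_midpoint_sq_le
    (hf : ∀ t, 0 ≤ t → 0 ≤ f t)
    (hmid : ∀ a b, 0 ≤ a → 0 ≤ b → f ((a + b) / 2) ^ 2 ≤ f a * f b)
    (h0 : 0 < f 0) {τ : ℝ} (hτ : 0 ≤ τ) (n : ℕ) :
    f 0 * (f τ / f 0) ^ 2 ^ n ≤ f (2 ^ n * τ) := by
  induction n with
  | zero => simp [mul_div_cancel₀ _ h0.ne']
  | succ n ih =>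
    have hdouble : f (2 ^ n * τ) ^ 2 ≤ f 0 * f (2 ^ (n + 1) * τ) := by
      have h := hmid 0 (2 ^ (n + 1) * τ) le_rfl (by positivity)
      rwa [show (0 + 2 ^ (n + 1) * τ) / 2 = 2 ^ n * τ by ring] at h
    calc f 0 * (f τ / f 0) ^ 2 ^ (n + 1) = (f 0 * (f τ / f 0) ^ 2 ^ n) ^ 2 / f 0 := by
          field_simp; ring
      _ ≤ f (2 ^ n * τ) ^ 2 / f 0 := by
          have : 0 ≤ f τ := hf τ hτ
          gcongr
      _ ≤ f (2 ^ (n + 1) * τ) := by rw [div_le_iff₀ h0]; linarith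

theorem le_apply_zero_of_midpoint_sq_le
    (hf : ∀ t, 0 ≤ t → 0 ≤ f t)
    (hmid : ∀ a b, 0 ≤ a → 0 ≤ b → f ((a + b) / 2) ^ 2 ≤ f a * f b)
    (hbdd : BddAbove (f '' Icc 0 1))
    (hint : ∫⁻ t in Ioi 0, ENNReal.ofReal (f t) < ⊤) {τ : ℝ} (hτ : 0 ≤ τ) :
    f τ ≤ f 0 := by
  by_contra! hlt
  have hτ₀ : 0 < τ := hτ.lt_of_ne (by rintro rfl; exact hlt.false)
  have h0 : 0 < f 0 := by
    refine (hf 0 le_rfl).lt_of_ne' fun h0 => ?_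
    have h := hmid 0 (2 * τ) le_rfl (by positivity)
    rw [show (0 + 2 * τ) / 2 = τ by ring, h0, zero_mul] at h
    nlinarith
  obtain ⟨K, hK⟩ := hbdd
  have hK₀ : 0 ≤ K := h0.le.trans (hK (mem_image_of_mem f ⟨le_rfl, zero_le_one⟩))
  set C := (∫⁻ t in Ioi 0, ENNReal.ofReal (f t)).toReal
  have hbound : ∀ s, 1 / 2 ≤ s → f s ≤ √(C * K) := by
    intro s hs
    have h := ofReal_sq_le_lintegral_Ioi_mul_of_midpoint_sq_le hf hmid
      (fun u hu => hK (mem_image_of_mem f hu)) hs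
    rw [← ENNReal.ofReal_toReal hint.ne, ← ENNReal.ofReal_mul ENNReal.toReal_nonneg,
      ENNReal.ofReal_le_ofReal_iff (by positivity)] at h
    exact (le_abs_self _).trans (Real.abs_le_sqrt h)
  have htimes : Tendsto (fun n : ℕ => (2 : ℝ) ^ n * τ) atTop atTop :=
    (tendsto_pow_atTop_atTop_of_one_lt one_lt_two).atTop_mul_const hτ₀
  have hgrowth : Tendsto (fun n : ℕ => f 0 * (f τ / f 0) ^ 2 ^ n) atTop atTop :=
    ((tendsto_pow_atTop_atTop_of_one_lt ((one_lt_div h0).2 hlt)).comp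
      (tendsto_pow_atTop_atTop_of_one_lt (one_lt_two : 1 < 2))).const_mul_atTop h0
  obtain ⟨n, hn, hbig⟩ := ((htimes.eventually_ge_atTop (1 / 2)).and
    (hgrowth.eventually_gt_atTop √(C * K))).exists
  exact (hbig.trans_le (mul_div_pow_two_pow_le_of_midpoint_sq_le hf hmid h0 hτ n)).not_ge
    (hbound _ hn)

end MidpointLogConvex

section SelfAdjointSemigroup

open scoped InnerProductSpace
open RCLike

variable {𝕜 H : Type*} [RCLike 𝕜] [NormedAddCommGroup H] [InnerProductSpace 𝕜 H]
  {R : ℝ → H →L[𝕜] H}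

lemma inner_apply_add_self_eq
    (hsemi : ∀ s t : ℝ, 0 ≤ s → 0 ≤ t → R (s + t) = (R s).comp (R t))
    (hsa : ∀ t : ℝ, 0 ≤ t → ∀ φ ψ : H, ⟪R t φ, ψ⟫_𝕜 = ⟪φ, R t ψ⟫_𝕜)
    {s t : ℝ} (hs : 0 ≤ s) (ht : 0 ≤ t) (φ : H) :
    ⟪R (s + t) φ, φ⟫_𝕜 = ⟪R t φ, R s φ⟫_𝕜 := by
  rw [hsemi s t hs ht, ContinuousLinearMap.comp_apply, hsa s hs]

lemma re_inner_apply_two_mul_self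
    (hsemi : ∀ s t : ℝ, 0 ≤ s → 0 ≤ t → R (s + t) = (R s).comp (R t))
    (hsa : ∀ t : ℝ, 0 ≤ t → ∀ φ ψ : H, ⟪R t φ, ψ⟫_𝕜 = ⟪φ, R t ψ⟫_𝕜)
    {s : ℝ} (hs : 0 ≤ s) (φ : H) :
    re ⟪R (2 * s) φ, φ⟫_𝕜 = ‖R s φ‖ ^ 2 := by
  rw [two_mul, inner_apply_add_self_eq hsemi hsa hs hs,
    inner_self_eq_norm_sq]

lemma re_inner_apply_self_nonneg
    (hsemi : ∀ s t : ℝ, 0 ≤ s → 0 ≤ t → R (s + t) = (R s).comp (R t))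
    (hsa : ∀ t : ℝ, 0 ≤ t → ∀ φ ψ : H, ⟪R t φ, ψ⟫_𝕜 = ⟪φ, R t ψ⟫_𝕜)
    {t : ℝ} (ht : 0 ≤ t) (φ : H) :
    0 ≤ re ⟪R t φ, φ⟫_𝕜 := by
  rw [← mul_div_cancel₀ t two_ne_zero, re_inner_apply_two_mul_self hsemi hsa (by positivity)]
  positivity

lemma re_inner_apply_midpoint_sq_le
    (hsemi : ∀ s t : ℝ, 0 ≤ s → 0 ≤ t → R (s + t) = (R s).comp (R t))
    (hsa : ∀ t : ℝ, 0 ≤ t → ∀ φ ψ : H, ⟪R t φ, ψ⟫_𝕜 = ⟪φ, R t ψ⟫_𝕜)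
    {a b : ℝ} (ha : 0 ≤ a) (hb : 0 ≤ b) (φ : H) :
    re ⟪R ((a + b) / 2) φ, φ⟫_𝕜 ^ 2 ≤ re ⟪R a φ, φ⟫_𝕜 * re ⟪R b φ, φ⟫_𝕜 := by
  obtain ⟨s, rfl⟩ : ∃ s, a = 2 * s := ⟨a / 2, by ring⟩
  obtain ⟨t, rfl⟩ : ∃ t, b = 2 * t := ⟨b / 2, by ring⟩
  have hs : 0 ≤ s := by linarith
  have ht : 0 ≤ t := by linarith
  rw [show (2 * s + 2 * t) / 2 = s + t by ring, inner_apply_add_self_eq hsemi hsa hs ht,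
    re_inner_apply_two_mul_self hsemi hsa hs, re_inner_apply_two_mul_self hsemi hsa ht]
  calc re ⟪R t φ, R s φ⟫_𝕜 ^ 2 ≤ (‖R t φ‖ * ‖R s φ‖) ^ 2 := by
        rw [sq_le_sq, abs_of_nonneg (mul_nonneg (norm_nonneg _) (norm_nonneg _))]
        exact (abs_re_le_norm _).trans (norm_inner_le_norm _ _)
    _ = ‖R s φ‖ ^ 2 * ‖R t φ‖ ^ 2 := by ring

end SelfAdjointSemigroup

theorem selfadjoint_semigroup_contraction_general {H : Type*} [NormedAddCommGroup H]
    [InnerProductSpace ℂ H]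
    (R : ℝ → H →L[ℂ] H)
    (hR0 : R 0 = ContinuousLinearMap.id ℂ H)
    (hsemi : ∀ s t : ℝ, 0 ≤ s → 0 ≤ t → R (s + t) = (R s).comp (R t))
    (hsa : ∀ t : ℝ, 0 ≤ t → ∀ φ ψ : H,
      inner (𝕜 := ℂ) (R t φ) ψ = inner (𝕜 := ℂ) φ (R t ψ))
    (hcont : ∀ φ : H, ContinuousOn (fun t => R t φ) (Set.Ici (0 : ℝ)))
    (D : Set H) (hD : Dense D)
    (hfin : ∀ φ ∈ D, ∫⁻ t in Set.Ioi (0 : ℝ),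
        ENNReal.ofReal (inner (𝕜 := ℂ) (R t φ) φ).re < ⊤) :
    ∀ t : ℝ, 0 ≤ t → ∀ φ : H, ‖R t φ‖ ≤ ‖φ‖ := by
  intro t ht φ
  induction φ using hD.induction with
  | isClosed => exact isClosed_le (R t).continuous.norm continuous_norm
  | mem φ hφ =>
    have hcontOn : ContinuousOn (fun t => RCLike.re (inner (𝕜 := ℂ) (R t φ) φ)) (Icc 0 1) :=
      RCLike.continuous_re.comp_continuousOn
        (((hcont φ).mono Icc_subset_Ici_self).inner continuousOn_const)
    have hle := le_apply_zero_of_midpoint_sq_le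
      (fun s hs => re_inner_apply_self_nonneg hsemi hsa hs φ)
      (fun a b ha hb => re_inner_apply_midpoint_sq_le hsemi hsa ha hb φ)
      (isCompact_Icc.bddAbove_image hcontOn) (hfin φ hφ) (mul_nonneg zero_le_two ht)
    rw [re_inner_apply_two_mul_self hsemi hsa ht, hR0, ContinuousLinearMap.id_apply,
      inner_self_eq_norm_sq] at hle
    exact (pow_le_pow_iff_left₀ (norm_nonneg _) (norm_nonneg _) two_ne_zero).1 hle

/-- The abstract content of statement (1.8) of Lemma 1.1 of the paper: a strongly
continuous self-adjoint semigroup `(R_t)_{t≥0}` on a complex Hilbert space `H` such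
that `∫₀^∞ ⟨R_t φ, φ⟩ dt < ∞` for all `φ` in a dense set `D` consists of
contractions. -/
theorem selfadjoint_semigroup_contraction {H : Type*} [NormedAddCommGroup H]
    [InnerProductSpace ℂ H] [CompleteSpace H]
    (R : ℝ → H →L[ℂ] H)
    (hR0 : R 0 = ContinuousLinearMap.id ℂ H)
    (hsemi : ∀ s t : ℝ, 0 ≤ s → 0 ≤ t → R (s + t) = (R s).comp (R t))
    (hsa : ∀ t : ℝ, 0 ≤ t → ∀ φ ψ : H,
      inner (𝕜 := ℂ) (R t φ) ψ = inner (𝕜 := ℂ) φ (R t ψ))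
    (hcont : ∀ φ : H, ContinuousOn (fun t => R t φ) (Set.Ici (0 : ℝ)))
    (D : Set H) (hD : Dense D)
    (hfin : ∀ φ ∈ D, ∫⁻ t in Set.Ioi (0 : ℝ),
        ENNReal.ofReal (inner (𝕜 := ℂ) (R t φ) φ).re < ⊤) :
    ∀ t : ℝ, 0 ≤ t → ∀ φ : H, ‖R t φ‖ ≤ ‖φ‖ :=
  selfadjoint_semigroup_contraction_general R hR0 hsemi hsa hcont D hD hfin
end
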